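/- arXiv:1706.09046 — 4 statements merged into one kernel-verified Lean document; each statement's English description precedes it below -/
import Mathlib

section
/- Let p ≥ 1 and q ≥ 0 be real numbers, λ ∈ ℂ, and set a = (p+2q+2λ)/4, b = (p+2q−2λ)/4, c = (p+q+1)/2. Let T > 0 and let g : ℝ → ℂ be twice differentiable on the open interval (−sinh²T, 0). Define f : (0,T) → ℂ by f(t) = g(−sinh²t). If f satisfies f''(t) + ((p+q)·coth t + q·tanh t)·f'(t) = (λ² − (p+2q)²/4)·f(t) for all t ∈ (0,T), then g satisfies the hypergeometric equation z(z−1)·g''(z) + ((a+b+1)z − c)·g'(z) + ab·g(z) = 0 for all z ∈ (−sinh²T, 0). -/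
/-!
With `z = φ t = -sinh² t` one has `φ' = -2 sinh t cosh t` and `φ'' = -2 (cosh² t + sinh² t)`,
so the chain rule expresses `f'` and `f''` through `g'` and `g''` at `z`. Multiplying out with
`sinh² t = -z` and `cosh² t = 1 - z`, the radial operator applied to `f` becomes four times
`z(z-1) g'' + ((a+b+1) z - c) g'`; the eigenvalue `λ² - (p+2q)²/4` is exactly `-4ab`.
-/

open Real Filter Topology

theorem deriv_deriv_comp {E : Type*} [NormedAddCommGroup E] [NormedSpace ℝ E]
    {g : ℝ → E} {φ φ' : ℝ → ℝ} {φ'' t : ℝ}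
    (hφ : ∀ᶠ s in 𝓝 t, HasDerivAt φ (φ' s) s) (hφ' : HasDerivAt φ' φ'' t)
    (hg : ∀ᶠ z in 𝓝 (φ t), DifferentiableAt ℝ g z) (hg' : DifferentiableAt ℝ (deriv g) (φ t)) :
    deriv (deriv (g ∘ φ)) t = φ' t ^ 2 • deriv (deriv g) (φ t) + φ'' • deriv g (φ t) := by
  have hg_comp : ∀ᶠ s in 𝓝 t, DifferentiableAt ℝ g (φ s) :=
    hφ.self_of_nhds.continuousAt.tendsto.eventually hg
  have h_deriv : deriv (g ∘ φ) =ᶠ[𝓝 t] fun s => φ' s • deriv g (φ s) :=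
    (hφ.and hg_comp).mono fun s ⟨hφs, hgs⟩ => (hgs.hasDerivAt.scomp s hφs).deriv
  have h_second : HasDerivAt (fun s => φ' s • deriv g (φ s))
      (φ' t • φ' t • deriv (deriv g) (φ t) + φ'' • deriv g (φ t)) t :=
    hφ'.smul (hg'.hasDerivAt.scomp t hφ.self_of_nhds)
  rw [h_deriv.deriv_eq, h_second.deriv, smul_smul, sq]

theorem hasDerivAt_neg_sinh_sq (t : ℝ) :
    HasDerivAt (fun s => -sinh s ^ 2) (-(2 * sinh t * cosh t)) t :=
  ((hasDerivAt_sinh t).fun_pow 2).fun_neg.congr_deriv (by norm_num)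

theorem hasDerivAt_neg_two_mul_sinh_mul_cosh (t : ℝ) :
    HasDerivAt (fun s => -(2 * sinh s * cosh s)) (-(2 * (cosh t ^ 2 + sinh t ^ 2))) t :=
  (((hasDerivAt_sinh t).const_mul 2).fun_mul (hasDerivAt_cosh t)).fun_neg.congr_deriv (by ring)

theorem exists_mem_Ioo_neg_sinh_sq_eq {T z : ℝ} (hT : 0 < T) (hz : z ∈ Set.Ioo (-sinh T ^ 2) 0) :
    ∃ t ∈ Set.Ioo 0 T, -sinh t ^ 2 = z := by
  have hz_neg : 0 < -z := by linarith [hz.2]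
  refine ⟨arsinh √(-z), ⟨arsinh_pos_iff.mpr (sqrt_pos.mpr hz_neg), ?_⟩, ?_⟩
  · rw [← sinh_lt_sinh, sinh_arsinh, sqrt_lt' (sinh_pos_iff.mpr hT)]
    linarith [hz.1]
  · rw [sinh_arsinh, sq_sqrt hz_neg.le, neg_neg]

theorem radial_operator_eq_of_comp_neg_sinh_sq (p q : ℝ) {g f : ℝ → ℂ} {t : ℝ} (ht : t ≠ 0)
    (hf : ∀ s, f s = g (-sinh s ^ 2))
    (hg : ∀ᶠ z in 𝓝 (-sinh t ^ 2), DifferentiableAt ℝ g z)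
    (hg' : DifferentiableAt ℝ (deriv g) (-sinh t ^ 2)) :
    deriv (deriv f) t + (((p + q) * (cosh t / sinh t) + q * tanh t : ℝ) : ℂ) * deriv f t
      = 4 * (((-sinh t ^ 2 : ℝ) : ℂ) * (((-sinh t ^ 2 : ℝ) : ℂ) - 1) * deriv (deriv g) (-sinh t ^ 2)
        + ((((p : ℂ) + 2 * q) / 2 + 1) * ((-sinh t ^ 2 : ℝ) : ℂ) - ((p : ℂ) + q + 1) / 2)
          * deriv g (-sinh t ^ 2)) := by
  have hf_comp : f = g ∘ fun s => -sinh s ^ 2 := funext hf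
  have h_first : deriv f t = (-(2 * sinh t * cosh t) : ℝ) • deriv g (-sinh t ^ 2) := by
    rw [hf_comp, deriv.scomp t hg.self_of_nhds (hasDerivAt_neg_sinh_sq t).differentiableAt,
      (hasDerivAt_neg_sinh_sq t).deriv]
  have h_second := deriv_deriv_comp (Eventually.of_forall hasDerivAt_neg_sinh_sq)
    (hasDerivAt_neg_two_mul_sinh_mul_cosh t) hg hg'
  rw [← hf_comp] at h_second
  have hsinh : sinh t ≠ 0 := sinh_ne_zero.mpr ht
  have hcosh : cosh t ≠ 0 := (cosh_pos t).ne'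
  have h_coeff : ((p + q) * (cosh t / sinh t) + q * tanh t) * (-(2 * sinh t * cosh t))
      = -2 * ((p + q) * cosh t ^ 2 + q * sinh t ^ 2) := by
    rw [tanh_eq_sinh_div_cosh]
    field_simp
  rw [h_second, h_first]
  simp only [Complex.real_smul]
  have h_coeff_ℂ := congrArg (fun x : ℝ => (x : ℂ)) h_coeff
  have h_cosh_sq := congrArg (fun x : ℝ => (x : ℂ)) (cosh_sq t)
  push_cast at h_coeff_ℂ h_cosh_sq ⊢
  linear_combination deriv g (-sinh t ^ 2) * h_coeff_ℂ
    + (4 * Complex.sinh t ^ 2 * deriv (deriv g) (-sinh t ^ 2)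
      - (2 * (p : ℂ) + 2 * q + 2) * deriv g (-sinh t ^ 2)) * h_cosh_sq

theorem hypergeometric_from_radial_general (p q : ℝ) (lam : ℂ)
    (a b c : ℂ)
    (ha : a = ((p : ℂ) + 2 * (q : ℂ) + 2 * lam) / 4)
    (hb : b = ((p : ℂ) + 2 * (q : ℂ) - 2 * lam) / 4)
    (hc : c = ((p : ℂ) + (q : ℂ) + 1) / 2)
    (T : ℝ) (hT : 0 < T) (g : ℝ → ℂ)
    (hg1 : ∀ z ∈ Set.Ioo (-(Real.sinh T) ^ 2) (0 : ℝ), DifferentiableAt ℝ g z)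
    (hg2 : ∀ z ∈ Set.Ioo (-(Real.sinh T) ^ 2) (0 : ℝ), DifferentiableAt ℝ (deriv g) z)
    (f : ℝ → ℂ) (hf : ∀ t : ℝ, f t = g (-(Real.sinh t) ^ 2))
    (hode : ∀ t ∈ Set.Ioo (0 : ℝ) T,
      deriv (deriv f) t
        + (((p + q) * (Real.cosh t / Real.sinh t) + q * Real.tanh t : ℝ) : ℂ) * deriv f t
        = (lam ^ 2 - ((p : ℂ) + 2 * (q : ℂ)) ^ 2 / 4) * f t) :
    ∀ z ∈ Set.Ioo (-(Real.sinh T) ^ 2) (0 : ℝ),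
      (z : ℂ) * ((z : ℂ) - 1) * deriv (deriv g) z
        + ((a + b + 1) * (z : ℂ) - c) * deriv g z + a * b * g z = 0 := by
  intro z hz
  obtain ⟨t, ht, rfl⟩ := exists_mem_Ioo_neg_sinh_sq_eq hT hz
  have hg_near : ∀ᶠ z in 𝓝 (-sinh t ^ 2), DifferentiableAt ℝ g z :=
    eventually_of_mem (Ioo_mem_nhds hz.1 hz.2) hg1
  have h_radial := radial_operator_eq_of_comp_neg_sinh_sq p q ht.1.ne' hf hg_near (hg2 _ hz)
  rw [hode t ht, hf] at h_radial
  rw [ha, hb, hc]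
  linear_combination (-1 / 4 : ℂ) * h_radial

/-- Change of variable `z = −sinh²t` transforming the radial eigenvalue equation
`f'' + ((p+q) coth t + q tanh t) f' = (λ² − (p+2q)²/4) f` on `(0,T)` into the
hypergeometric equation `z(z−1) g'' + ((a+b+1)z − c) g' + ab g = 0` on `(−sinh²T, 0)`,
with `a = (p+2q+2λ)/4`, `b = (p+2q−2λ)/4`, `c = (p+q+1)/2`. -/
theorem hypergeometric_from_radial (p q : ℝ) (hp : 1 ≤ p) (hq : 0 ≤ q) (lam : ℂ)
    (a b c : ℂ)
    (ha : a = ((p : ℂ) + 2 * (q : ℂ) + 2 * lam) / 4)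
    (hb : b = ((p : ℂ) + 2 * (q : ℂ) - 2 * lam) / 4)
    (hc : c = ((p : ℂ) + (q : ℂ) + 1) / 2)
    (T : ℝ) (hT : 0 < T) (g : ℝ → ℂ)
    (hg1 : ∀ z ∈ Set.Ioo (-(Real.sinh T) ^ 2) (0 : ℝ), DifferentiableAt ℝ g z)
    (hg2 : ∀ z ∈ Set.Ioo (-(Real.sinh T) ^ 2) (0 : ℝ), DifferentiableAt ℝ (deriv g) z)
    (f : ℝ → ℂ) (hf : ∀ t : ℝ, f t = g (-(Real.sinh t) ^ 2))
    (hode : ∀ t ∈ Set.Ioo (0 : ℝ) T,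
      deriv (deriv f) t
        + (((p + q) * (Real.cosh t / Real.sinh t) + q * Real.tanh t : ℝ) : ℂ) * deriv f t
        = (lam ^ 2 - ((p : ℂ) + 2 * (q : ℂ)) ^ 2 / 4) * f t) :
    ∀ z ∈ Set.Ioo (-(Real.sinh T) ^ 2) (0 : ℝ),
      (z : ℂ) * ((z : ℂ) - 1) * deriv (deriv g) z
        + ((a + b + 1) * (z : ℂ) - c) * deriv g z + a * b * g z = 0 :=
  hypergeometric_from_radial_general p q lam a b c ha hb hc T hT g hg1 hg2 f hf hode
end

section
/- Let p ≥ 1 and q ≥ 0 be integers, λ ∈ ℂ, and set a = (p+2q+2λ)/4, b = (p+2q−2λ)/4, c = (p+q+1)/2. Define f : ℝ → ℂ by f(t) = Σ_{k=0}^∞ ((a)_k (b)_k / ((c)_k · k!)) · (−sinh²t)^k for t with |sinh t| < 1. Then for all t ∈ (0, log(1+√2)) the function f satisfies f''(t) + ((p+q)·coth t + q·tanh t)·f'(t) = (λ² − (p+2q)²/4)·f(t). -/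
/-!
The series is Gauss's `₂F₁(a, b; c; z)` at `z = -sinh² t`. Since `c > 0`, its radius of
convergence is at least `1`, and the recurrence `(n+1)(n+c) dₙ₊₁ = (n+a)(n+b) dₙ` of its
coefficients says exactly that it solves the hypergeometric equation
`z(1-z)F'' + (c-(a+b+1)z)F' - abF = 0` on the unit disc. The substitution `z = -sinh² t` turns
`d²/dt² + ((p+q) coth t + q tanh t) d/dt` into `-4` times the operator
`z(1-z) d²/dz² + ((p+q+1)/2 - ((p+2q)/2+1) z) d/dz`, which for the given `a, b, c` is the
hypergeometric operator plus `ab`; and `-4ab = λ² - (p+2q)²/4`.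
-/

open Filter Topology FormalMultilinearSeries
open scoped ENNReal

section PowerSeries

variable {𝕜 : Type*} [NontriviallyNormedField 𝕜]

def derivCoeff (g : ℕ → 𝕜) (n : ℕ) : 𝕜 := (n + 1) * g (n + 1)

theorem HasFPowerSeriesOnBall.deriv_ofScalars [CompleteSpace 𝕜] {g : ℕ → 𝕜} {f : 𝕜 → 𝕜}
    {x : 𝕜} {r : ℝ≥0∞} (h : HasFPowerSeriesOnBall f (ofScalars 𝕜 g) x r) :
    HasFPowerSeriesOnBall (deriv f) (ofScalars 𝕜 (derivCoeff g)) x r := by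
  convert (ContinuousLinearMap.apply 𝕜 𝕜 (1 : 𝕜)).comp_hasFPowerSeriesOnBall h.fderiv using 1
  · rfl
  ext n : 1
  rw [← mkPiRing_coeff_eq (ofScalars 𝕜 (derivCoeff g)),
    ← mkPiRing_coeff_eq (ContinuousLinearMap.compFormalMultilinearSeries _ _)]
  congr 1
  change _ = (ofScalars 𝕜 g).derivSeries.coeff n 1
  rw [derivSeries_coeff_one, coeff_ofScalars, coeff_ofScalars, derivCoeff, nsmul_eq_mul]
  push_cast
  rfl

theorem HasFPowerSeriesOnBall.hasSum_ofScalars {g : ℕ → 𝕜} {f : 𝕜 → 𝕜} {x z : 𝕜} {r : ℝ≥0∞}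
    (h : HasFPowerSeriesOnBall f (ofScalars 𝕜 g) x r) (hz : ‖z‖ₑ < r) :
    HasSum (fun n => g n * z ^ n) (f (x + z)) := by
  refine (h.hasSum (Metric.mem_eball.2 (by simpa using hz))).congr_fun fun n => ?_
  rw [ofScalars_apply_eq, smul_eq_mul]

theorem HasSum.natCast_mul_mul_pow {g : ℕ → 𝕜} {z A : 𝕜}
    (h : HasSum (fun n => derivCoeff g n * z ^ n) A) :
    HasSum (fun n => n * g n * z ^ n) (z * A) := by
  rw [← hasSum_nat_add_iff' 1, Finset.sum_range_one, Nat.cast_zero, zero_mul, zero_mul, sub_zero]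
  refine (h.mul_left z).congr_fun fun n => ?_
  rw [derivCoeff]
  push_cast
  ring

end PowerSeries

section Hypergeometric

variable {𝕜 : Type*} [NontriviallyNormedField 𝕜]

theorem hypergeometric_ode_of_hasSum {a b c z F F' F'' : 𝕜} {d : ℕ → 𝕜}
    (hrec : ∀ n : ℕ, (n + 1) * (n + c) * d (n + 1) = (n + a) * (n + b) * d n)
    (hF : HasSum (fun n => d n * z ^ n) F)
    (hF' : HasSum (fun n => derivCoeff d n * z ^ n) F')
    (hF'' : HasSum (fun n => derivCoeff (derivCoeff d) n * z ^ n) F'') :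
    z * (1 - z) * F'' + (c - (a + b + 1) * z) * F' - a * b * F = 0 := by
  -- both sums below are `∑ (n+1)(n+c) dₙ₊₁ zⁿ = ∑ (n+a)(n+b) dₙ zⁿ`
  have hzF'' := hF''.natCast_mul_mul_pow
  have hlhs : HasSum (fun n => (n + c) * derivCoeff d n * z ^ n) (z * F'' + c * F') :=
    (hzF''.add (hF'.mul_left c)).congr_fun fun n => by ring
  have hshift : HasSum (fun n => derivCoeff (fun n => (n + a + b) * d n) n * z ^ n)
      (z * F'' + (a + b + 1) * F') :=
    (hzF''.add (hF'.mul_left (a + b + 1))).congr_fun fun n => by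
      simp only [derivCoeff]
      push_cast
      ring
  have hrhs : HasSum (fun n => (n + c) * derivCoeff d n * z ^ n)
      (z * (z * F'' + (a + b + 1) * F') + a * b * F) :=
    (hshift.natCast_mul_mul_pow.add (hF.mul_left (a * b))).congr_fun fun n => by
      rw [derivCoeff, ← mul_assoc, mul_comm _ (n + 1 : 𝕜), ← mul_assoc, hrec]
      ring
  linear_combination hlhs.unique hrhs

theorem ascPochhammer_eval_eq_prod_range {R : Type*} [CommSemiring R] (n : ℕ) (x : R) :
    (ascPochhammer R n).eval x = ∏ i ∈ Finset.range n, (x + i) := by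
  induction n with
  | zero => simp
  | succ n ih => rw [ascPochhammer_succ_eval, ih, Finset.prod_range_succ]

variable {𝕂 : Type*} [RCLike 𝕂] (a b c : 𝕂)

theorem ordinaryHypergeometric_eq_tsum_prod (x : 𝕂) :
    ₂F₁ a b c x = ∑' k : ℕ, (∏ i ∈ Finset.range k, (a + i)) * (∏ i ∈ Finset.range k, (b + i)) /
      ((∏ i ∈ Finset.range k, (c + i)) * (k.factorial : 𝕂)) * x ^ k := by
  rw [ordinaryHypergeometric_eq_tsum]
  refine tsum_congr fun k => ?_
  simp only [ascPochhammer_eval_eq_prod_range, smul_eq_mul]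
  ring

theorem ordinaryHypergeometricCoefficient_succ {n : ℕ} (hc : (n : 𝕂) ≠ -c) :
    (n + 1) * (n + c) * ordinaryHypergeometricCoefficient a b c (n + 1) =
      (n + a) * (n + b) * ordinaryHypergeometricCoefficient a b c n := by
  have hcn : c + n ≠ 0 := fun h => hc (eq_neg_of_add_eq_zero_right h)
  simp only [ordinaryHypergeometricCoefficient, ascPochhammer_succ_eval, Nat.factorial_succ,
    Nat.cast_mul, mul_inv]
  generalize ((ascPochhammer 𝕂 n).eval c)⁻¹ = C
  push_cast
  field_simp
  ring

theorem one_le_radius_ordinaryHypergeometricSeries (𝔸 : Type*) [NormedDivisionRing 𝔸]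
    [NormedAlgebra 𝕂 𝔸] (hc : ∀ k : ℕ, (k : 𝕂) ≠ -c) :
    1 ≤ (ordinaryHypergeometricSeries 𝔸 a b c).radius := by
  by_cases ha : ∃ k : ℕ, (k : 𝕂) = -a
  · obtain ⟨k, hk⟩ := ha
    rw [neg_eq_iff_eq_neg.mp hk.symm, ordinaryHypergeometric_radius_top_of_neg_nat₁]
    exact le_top
  by_cases hb : ∃ k : ℕ, (k : 𝕂) = -b
  · obtain ⟨k, hk⟩ := hb
    rw [neg_eq_iff_eq_neg.mp hk.symm, ordinaryHypergeometric_radius_top_of_neg_nat₂]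
    exact le_top
  push Not at ha hb
  rw [ordinaryHypergeometricSeries_radius_eq_one _ _ _ _ fun k => ⟨ha k, hb k, hc k⟩]

theorem hasFPowerSeriesOnBall_ordinaryHypergeometric (hc : ∀ k : ℕ, (k : 𝕂) ≠ -c) :
    HasFPowerSeriesOnBall (₂F₁ a b c)
      (ofScalars 𝕂 (ordinaryHypergeometricCoefficient a b c)) 0 1 :=
  ((ordinaryHypergeometricSeries 𝕂 a b c).hasFPowerSeriesOnBall
    (zero_lt_one.trans_le (one_le_radius_ordinaryHypergeometricSeries a b c 𝕂 hc))).mono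
    zero_lt_one (one_le_radius_ordinaryHypergeometricSeries a b c 𝕂 hc)

theorem analyticAt_ordinaryHypergeometric (hc : ∀ k : ℕ, (k : 𝕂) ≠ -c) {z : 𝕂} (hz : ‖z‖ < 1) :
    AnalyticAt 𝕂 (₂F₁ a b c) z :=
  (hasFPowerSeriesOnBall_ordinaryHypergeometric a b c hc).analyticAt_of_mem
    (by rwa [Metric.mem_eball, edist_zero_right, ← ofReal_norm, ENNReal.ofReal_lt_one])

theorem ordinaryHypergeometric_ode (hc : ∀ k : ℕ, (k : 𝕂) ≠ -c) {z : 𝕂} (hz : ‖z‖ < 1) :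
    z * (1 - z) * deriv (deriv (₂F₁ a b c)) z + (c - (a + b + 1) * z) * deriv (₂F₁ a b c) z
      - a * b * ₂F₁ a b c z = 0 := by
  have hF := hasFPowerSeriesOnBall_ordinaryHypergeometric a b c hc
  have hz' : ‖z‖ₑ < 1 := by rwa [← ofReal_norm, ENNReal.ofReal_lt_one]
  simpa only [zero_add] using hypergeometric_ode_of_hasSum
    (fun n => ordinaryHypergeometricCoefficient_succ a b c (hc n)) (hF.hasSum_ofScalars hz')
    (hF.deriv_ofScalars.hasSum_ofScalars hz')
    (hF.deriv_ofScalars.deriv_ofScalars.hasSum_ofScalars hz')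

end Hypergeometric

theorem Complex.natCast_ne_neg_of_pos_re {c : ℂ} (hc : 0 < c.re) (k : ℕ) : (k : ℂ) ≠ -c := by
  intro h
  have := congrArg Complex.re h
  simp only [Complex.natCast_re, Complex.neg_re] at this
  linarith [k.cast_nonneg (α := ℝ)]

section ChainRule

variable {𝕜 𝕜' : Type*} [NontriviallyNormedField 𝕜] [NontriviallyNormedField 𝕜']
  [NormedAlgebra 𝕜 𝕜']

theorem deriv_deriv_comp_s8 {F : 𝕜' → 𝕜'} {φ φ' : 𝕜 → 𝕜'} {φ'' : 𝕜'} {t : 𝕜}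
    (hF : ∀ᶠ u in 𝓝 t, DifferentiableAt 𝕜' F (φ u))
    (hF' : DifferentiableAt 𝕜' (deriv F) (φ t))
    (hφ : ∀ᶠ u in 𝓝 t, HasDerivAt φ (φ' u) u) (hφ' : HasDerivAt φ' φ'' t) :
    deriv (deriv fun u => F (φ u)) t =
      deriv (deriv F) (φ t) * φ' t ^ 2 + deriv F (φ t) * φ'' := by
  have hderiv : deriv (fun u => F (φ u)) =ᶠ[𝓝 t] fun u => deriv F (φ u) * φ' u := by
    filter_upwards [hF, hφ] with u hFu hφu
    exact (hFu.hasDerivAt.comp u hφu).deriv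
  have hcomp : HasDerivAt (fun u => deriv F (φ u)) (deriv (deriv F) (φ t) * φ' t) t :=
    hF'.hasDerivAt.comp t hφ.self_of_nhds
  rw [hderiv.deriv_eq, (hcomp.fun_mul hφ').deriv]
  ring

end ChainRule

namespace Real

theorem sinh_lt_one_iff {t : ℝ} : sinh t < 1 ↔ t < log (1 + √2) := by
  rw [show log (1 + √2) = arsinh 1 by rw [arsinh]; norm_num, ← sinh_lt_sinh (y := arsinh 1),
    sinh_arsinh]

theorem radial_comp_neg_sinh_sq {F : ℂ → ℂ} {t : ℝ} (ht : sinh t ≠ 0)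
    (hF : ∀ᶠ u in 𝓝 t, DifferentiableAt ℂ F ((-sinh u ^ 2 : ℝ) : ℂ))
    (hF' : DifferentiableAt ℂ (deriv F) ((-sinh t ^ 2 : ℝ) : ℂ)) (p q : ℝ) :
    let z : ℂ := ((-sinh t ^ 2 : ℝ) : ℂ)
    deriv (deriv fun u => F ((-sinh u ^ 2 : ℝ) : ℂ)) t
        + (((p + q) * (cosh t / sinh t) + q * tanh t : ℝ) : ℂ)
          * deriv (fun u => F ((-sinh u ^ 2 : ℝ) : ℂ)) t
      = -4 * (z * (1 - z) * deriv (deriv F) z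
          + ((p + q + 1) / 2 - ((p + 2 * q) / 2 + 1) * z) * deriv F z) := by
  have hφ : ∀ u, HasDerivAt (fun u => ((-sinh u ^ 2 : ℝ) : ℂ))
      ((-(2 * sinh u * cosh u) : ℝ) : ℂ) u := fun u =>
    (((hasDerivAt_sinh u).fun_pow 2).fun_neg.congr_deriv (by norm_num)).ofReal_comp
  have hφ' : HasDerivAt (fun u => ((-(2 * sinh u * cosh u) : ℝ) : ℂ))
      ((-(2 * (cosh t ^ 2 + sinh t ^ 2)) : ℝ) : ℂ) t :=
    ((((hasDerivAt_sinh t).const_mul 2).fun_mul (hasDerivAt_cosh t)).fun_neg.congr_deriv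
      (by ring)).ofReal_comp
  have hcomp : HasDerivAt (fun u => F ((-sinh u ^ 2 : ℝ) : ℂ))
      (deriv F ((-sinh t ^ 2 : ℝ) : ℂ) * ((-(2 * sinh t * cosh t) : ℝ) : ℂ)) t :=
    hF.self_of_nhds.hasDerivAt.comp t (hφ t)
  intro z
  simp only [z]
  rw [deriv_deriv_comp_s8 hF hF' (.of_forall hφ) hφ', hcomp.deriv]
  generalize deriv F _ = F', deriv (deriv F) _ = F''
  have hs : (sinh t : ℂ) ≠ 0 := by exact_mod_cast ht
  have hC : (cosh t : ℂ) ≠ 0 := by exact_mod_cast (cosh_pos t).ne'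
  have hcosh : (cosh t : ℂ) ^ 2 = sinh t ^ 2 + 1 := by exact_mod_cast cosh_sq t
  simp only [tanh_eq_sinh_div_cosh]
  push_cast [-Complex.ofReal_sinh, -Complex.ofReal_cosh]
  field_simp
  linear_combination (8 * (sinh t : ℂ) ^ 2 * F'' - 4 * (p + q + 1) * F') * hcosh

end Real

/-- The hypergeometric series `f(t) = F(a,b,c; −sinh²t)`, where
`a = (p+2q+2λ)/4`, `b = (p+2q−2λ)/4`, `c = (p+q+1)/2` for integers `p ≥ 1`, `q ≥ 0`,
satisfies the radial eigenvalue equation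
`f'' + ((p+q) coth t + q tanh t) f' = (λ² − (p+2q)²/4) f` for `0 < t < log(1+√2)`. -/
theorem radial_ode_of_hypergeometric (p q : ℤ) (hp : 1 ≤ p) (hq : 0 ≤ q) (lam : ℂ)
    (a b c : ℂ)
    (ha : a = ((p : ℂ) + 2 * (q : ℂ) + 2 * lam) / 4)
    (hb : b = ((p : ℂ) + 2 * (q : ℂ) - 2 * lam) / 4)
    (hc : c = ((p : ℂ) + (q : ℂ) + 1) / 2)
    (f : ℝ → ℂ)
    (hf : ∀ t : ℝ, f t = ∑' k : ℕ,
      (∏ i ∈ Finset.range k, (a + i)) * (∏ i ∈ Finset.range k, (b + i)) /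
          ((∏ i ∈ Finset.range k, (c + i)) * (Nat.factorial k : ℂ)) *
        ((-(Real.sinh t) ^ 2 : ℝ) : ℂ) ^ k) :
    ∀ t ∈ Set.Ioo (0 : ℝ) (Real.log (1 + Real.sqrt 2)),
      deriv (deriv f) t
        + ((((p : ℝ) + (q : ℝ)) * (Real.cosh t / Real.sinh t) + (q : ℝ) * Real.tanh t : ℝ) : ℂ)
            * deriv f t
        = (lam ^ 2 - ((p : ℂ) + 2 * (q : ℂ)) ^ 2 / 4) * f t := by
  rintro t ⟨ht0, ht1⟩
  have hfF : f = fun u => ₂F₁ a b c ((-Real.sinh u ^ 2 : ℝ) : ℂ) :=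
    funext fun u => by rw [hf, ordinaryHypergeometric_eq_tsum_prod]
  have hc' : ∀ k : ℕ, (k : ℂ) ≠ -c := Complex.natCast_ne_neg_of_pos_re <| by
    have hpq : (1 : ℝ) ≤ p + q := by exact_mod_cast Int.add_le_add hp hq
    rw [hc]
    simp only [Complex.div_ofNat_re, Complex.add_re, Complex.intCast_re, Complex.one_re]
    linarith
  have hz : ∀ᶠ u in 𝓝 t, ‖((-Real.sinh u ^ 2 : ℝ) : ℂ)‖ < 1 := by
    refine (Continuous.continuousAt (by fun_prop)).eventually_lt continuousAt_const ?_
    simp only [Complex.norm_real, norm_neg, norm_pow, Real.norm_eq_abs, sq_abs]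
    nlinarith [Real.sinh_pos_iff.2 ht0, Real.sinh_lt_one_iff.2 ht1]
  have hF : ∀ {z : ℂ}, ‖z‖ < 1 → AnalyticAt ℂ (₂F₁ a b c) z :=
    analyticAt_ordinaryHypergeometric a b c hc'
  rw [hfF, Real.radial_comp_neg_sinh_sq (Real.sinh_pos_iff.2 ht0).ne'
    (hz.mono fun u hu => (hF hu).differentiableAt) (hF hz.self_of_nhds).deriv.differentiableAt]
  have hODE := ordinaryHypergeometric_ode a b c hc' hz.self_of_nhds
  subst ha hb hc
  push_cast at hODE ⊢
  linear_combination (-4 : ℂ) * hODE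
end

section
/- For every λ ∈ ℝ and every t > 0, ∫₀ᵗ cos(λs) · (t² − s²)^{−1/2} ds = (π/2) · Σ_{k=0}^∞ ((−1)^k / (k!)²) · (λt/2)^{2k}. -/
/-!
Substituting `s = t sin θ` turns the integral into `∫₀^{π/2} cos (λ t sin θ) dθ`. The cosine
series of `λ t sin θ` is dominated by that of `|λ t|`, so it may be integrated term by term, and
the Wallis integrals `∫₀^{π/2} sin^{2k} θ dθ = (π/2) (2k)! / (4^k (k!)²)` turn it into the series
of `(π/2) J₀(λ t)`.
-/

open MeasureTheory Real Set
open scoped Nat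

theorem image_mul_sin_Ioo_zero_pi_div_two {t : ℝ} (ht : 0 < t) :
    (fun θ => t * sin θ) '' Ioo 0 (π / 2) = Ioo 0 t := by
  have hmono : StrictMonoOn (fun θ => t * sin θ) (Icc 0 (π / 2)) := fun x hx y hy hxy =>
    mul_lt_mul_of_pos_left (strictMonoOn_sin
      ⟨by linarith [pi_pos, hx.1], hx.2⟩ ⟨by linarith [pi_pos, hy.1], hy.2⟩ hxy) ht
  rw [(by fun_prop : Continuous fun θ => t * sin θ).continuousOn.image_Ioo_of_strictMonoOn
    (by positivity) hmono]
  simp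

theorem sq_rpow_neg_one_half {a : ℝ} (ha : 0 ≤ a) : (a ^ 2) ^ (-(1 / 2) : ℝ) = a⁻¹ := by
  rw [← rpow_natCast, ← rpow_mul ha]
  norm_num [rpow_neg_one]

theorem integral_Ioo_sq_sub_sq_rpow_smul_eq_integral_sin {E : Type*} [NormedAddCommGroup E]
    [NormedSpace ℝ E] (g : ℝ → E) {t : ℝ} (ht : 0 < t) :
    ∫ s in Ioo 0 t, (t ^ 2 - s ^ 2) ^ (-(1 / 2) : ℝ) • g s
      = ∫ θ in Ioo 0 (π / 2), g (t * sin θ) := by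
  have hinj : InjOn (fun θ => t * sin θ) (Ioo 0 (π / 2)) :=
    (mul_right_injective₀ ht.ne').comp_injOn
      (injOn_sin.mono (Ioo_subset_Icc_self.trans (Icc_subset_Icc (by linarith [pi_pos]) le_rfl)))
  have hsub := integral_image_eq_integral_abs_deriv_smul (f' := fun θ => t * cos θ)
    measurableSet_Ioo (fun θ _ => ((hasDerivAt_sin θ).const_mul t).hasDerivWithinAt) hinj
    (fun s => (t ^ 2 - s ^ 2) ^ (-(1 / 2) : ℝ) • g s)
  rw [image_mul_sin_Ioo_zero_pi_div_two ht] at hsub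
  rw [hsub]
  refine setIntegral_congr_fun measurableSet_Ioo fun θ hθ => ?_
  have hcos : 0 < t * cos θ :=
    mul_pos ht (cos_pos_of_mem_Ioo ⟨by linarith [pi_pos, hθ.1], hθ.2⟩)
  have hsq : t ^ 2 - (t * sin θ) ^ 2 = (t * cos θ) ^ 2 := by
    linear_combination -t ^ 2 * sin_sq_add_cos_sq θ
  rw [hsq, sq_rpow_neg_one_half hcos.le, smul_smul, abs_of_pos hcos, mul_inv_cancel₀ hcos.ne',
    one_smul]

theorem integral_zero_pi_div_two_sin_pow (n : ℕ) :
    ∫ x in 0..π / 2, sin x ^ n = (∫ x in 0..π, sin x ^ n) / 2 := by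
  have hint : ∀ a b : ℝ, IntervalIntegrable (fun x => sin x ^ n) volume a b :=
    fun a b => (continuous_sin.pow n).intervalIntegrable a b
  have hsymm : ∫ x in π / 2..π, sin x ^ n = ∫ x in 0..π / 2, sin x ^ n := by
    simpa [sin_pi_sub, show π - π / 2 = π / 2 by ring] using
      (intervalIntegral.integral_comp_sub_left (fun x => sin x ^ n) π (a := 0) (b := π / 2)).symm
  rw [← intervalIntegral.integral_add_adjacent_intervals (hint 0 (π / 2)) (hint (π / 2) π),
    hsymm]
  ring

theorem prod_range_two_mul_add_one_div_two_mul_add_two (k : ℕ) :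
    ∏ i ∈ Finset.range k, (2 * (i : ℝ) + 1) / (2 * i + 2)
      = (2 * k)! / (4 ^ k * (k ! : ℝ) ^ 2) := by
  induction k with
  | zero => simp
  | succ k ih =>
    rw [Finset.prod_range_succ, ih, show 2 * (k + 1) = 2 * k + 1 + 1 by ring,
      Nat.factorial_succ, Nat.factorial_succ, Nat.factorial_succ]
    push_cast
    field_simp
    ring

theorem integral_zero_pi_div_two_sin_pow_even (k : ℕ) :
    ∫ x in 0..π / 2, sin x ^ (2 * k) = π / 2 * ((2 * k)! / (4 ^ k * (k ! : ℝ) ^ 2)) := by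
  rw [integral_zero_pi_div_two_sin_pow, integral_sin_pow_even,
    prod_range_two_mul_add_one_div_two_mul_add_two]
  ring

theorem hasSum_integral_cos_comp {α : Type*} [MeasurableSpace α] {μ : Measure α}
    [IsFiniteMeasure μ] {f : α → ℝ} {B : ℝ} (hf : AEStronglyMeasurable f μ)
    (hB : ∀ᵐ x ∂μ, |f x| ≤ B) :
    HasSum (fun n => (-1) ^ n / (2 * n)! * ∫ x, f x ^ (2 * n) ∂μ) (∫ x, cos (f x) ∂μ) := by
  have hsum : Summable fun n : ℕ => B ^ (2 * n) / (2 * n)! :=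
    (summable_pow_div_factorial B).comp_injective (mul_right_injective₀ two_ne_zero)
  have h := hasSum_integral_of_dominated_convergence
    (F := fun n x => (-1) ^ n * f x ^ (2 * n) / (2 * n)!) (fun n _ => B ^ (2 * n) / (2 * n)!)
    (fun n => by fun_prop)
    (fun n => hB.mono fun x hx => by
      rw [norm_div, norm_mul, norm_pow, norm_pow, norm_neg, norm_one, one_pow, one_mul,
        Real.norm_natCast, Real.norm_eq_abs]
      gcongr)
    (ae_of_all _ fun _ => hsum) (integrable_const _) (ae_of_all _ fun x => hasSum_cos (f x))
  simpa only [integral_div, integral_const_mul, div_mul_eq_mul_div] using h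

theorem hasSum_integral_cos_mul_sin (c : ℝ) :
    HasSum (fun k : ℕ => π / 2 * ((-1) ^ k / (k ! : ℝ) ^ 2 * (c / 2) ^ (2 * k)))
      (∫ θ in Ioo 0 (π / 2), cos (c * sin θ)) := by
  have hbound : ∀ θ, |c * sin θ| ≤ |c| := fun θ => by
    rw [abs_mul]
    exact mul_le_of_le_one_right (abs_nonneg c) (abs_sin_le_one θ)
  convert hasSum_integral_cos_comp (μ := volume.restrict (Ioo 0 (π / 2)))
    (by fun_prop : Continuous fun θ => c * sin θ).aestronglyMeasurable (ae_of_all _ hbound)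
    using 2 with k
  rw [← integral_Ioc_eq_integral_Ioo, ← intervalIntegral.integral_of_le (by positivity)]
  simp_rw [mul_pow, intervalIntegral.integral_const_mul, integral_zero_pi_div_two_sin_pow_even,
    div_pow, pow_mul]
  field_simp
  ring

/-- `∫₀ᵗ cos(λs) (t² − s²)^{−1/2} ds = (π/2) Σ ((−1)ᵏ/(k!)²) (λt/2)^{2k}`:
the truncated spherical integral on `SL(2,ℝ)` equals `(π/2) J₀(λt)`. -/
theorem integral_eq_bessel (lam t : ℝ) (ht : 0 < t) :
    (∫ s in Set.Ioo (0 : ℝ) t, Real.cos (lam * s) * (t ^ 2 - s ^ 2) ^ (-(1 / 2) : ℝ))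
      = (Real.pi / 2) *
        ∑' k : ℕ, ((-1) ^ k / ((Nat.factorial k : ℝ)) ^ 2) * (lam * t / 2) ^ (2 * k) := by
  have hsub := integral_Ioo_sq_sub_sq_rpow_smul_eq_integral_sin (fun s => cos (lam * s)) ht
  simp only [smul_eq_mul, mul_comm _ (cos _), ← mul_assoc] at hsub
  rw [hsub, ← tsum_mul_left]
  exact (hasSum_integral_cos_mul_sin (lam * t)).tsum_eq.symm
end

section
/- For every λ ∈ ℝ and every t > 0, (1/(2π)) · ∫₀^{2π} (cosh t + sinh t · cos θ)^{iλ − 1/2} dθ = (√2/π) · ∫₀ᵗ cos(λs) · (cosh t − cosh s)^{−1/2} ds, where for x > 0 and w ∈ ℂ the complex power x^w is exp(w · log x). -/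
/-!
Write `A θ = cosh t + sinh t cos θ`. The reflection `θ ↦ 2π - θ` halves the left integral to
one over `(0, π)`, on which `s = log (A θ)` decreases from `t` to `-t`. Since
`cosh t - cosh s = (sinh t sin θ)² / (2 A θ)` and `|ds/dθ| = sinh t sin θ / A θ`, the
substitution turns `A^{iλ - 1/2} dθ` into `2^{-1/2} e^{iλs} (cosh t - cosh s)^{-1/2} ds` on
`(-t, t)`, and the odd part of `e^{iλs}` integrates to zero.
-/

open Real Set MeasureTheory

variable {E : Type*} [NormedAddCommGroup E] [NormedSpace ℝ E]

lemma setIntegral_Ioo_eq_intervalIntegral {f : ℝ → E} {a b : ℝ} (hab : a ≤ b) :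
    ∫ x in Ioo a b, f x = ∫ x in a..b, f x := by
  rw [intervalIntegral.integral_of_le hab, integral_Ioc_eq_integral_Ioo]

lemma intervalIntegral.integral_zero_two_mul_eq_two_smul_of_reflect {f : ℝ → E} {a : ℝ}
    (hf : IntervalIntegrable f volume 0 a) (hreflect : ∀ x, f (2 * a - x) = f x) :
    ∫ x in 0..2 * a, f x = (2 : ℝ) • ∫ x in 0..a, f x := by
  have hreflected : ∫ x in a..2 * a, f x = ∫ x in 0..a, f x := by
    have h := intervalIntegral.integral_comp_sub_left (a := 0) (b := a) f (2 * a)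
    simp only [hreflect, sub_zero, show 2 * a - a = a by ring] at h
    exact h.symm
  have hf' : IntervalIntegrable f volume a (2 * a) := by
    have h := hf.comp_sub_left (2 * a)
    simp only [hreflect, sub_zero, show 2 * a - a = a by ring] at h
    exact h.symm
  rw [← intervalIntegral.integral_add_adjacent_intervals hf hf', hreflected, two_smul]

lemma intervalIntegral.integral_neg_eq_integral_add_comp_neg {f : ℝ → E} {a : ℝ}
    (hf : IntervalIntegrable f volume (-a) a) :
    ∫ x in -a..a, f x = ∫ x in 0..a, (f x + f (-x)) := by
  have hzero : (0 : ℝ) ∈ uIcc (-a) a := by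
    rcases le_total 0 a with h | h <;> simp [h]
  have hleft := hf.mono_set (uIcc_subset_uIcc left_mem_uIcc hzero)
  have hright := hf.mono_set (uIcc_subset_uIcc hzero right_mem_uIcc)
  rw [← intervalIntegral.integral_add_adjacent_intervals hleft hright,
    intervalIntegral.integral_add hright
      (by simpa using (IntervalIntegrable.iff_comp_neg (f := f)).mp hleft |>.symm),
    add_comm, intervalIntegral.integral_comp_neg, neg_zero]

lemma cosh_add_sinh_mul_cos_pos (t θ : ℝ) : 0 < cosh t + sinh t * cos θ := by
  have hsinh : |sinh t * cos θ| ≤ |sinh t| := by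
    rw [abs_mul]; exact mul_le_of_le_one_right (abs_nonneg _) (abs_cos_le_one θ)
  have hcosh : |sinh t| < cosh t := by rw [abs_sinh, ← cosh_abs]; exact sinh_lt_cosh _
  linarith [neg_abs_le (sinh t * cos θ)]

lemma continuous_log_cosh_add_sinh_mul_cos (t : ℝ) :
    Continuous fun θ ↦ log (cosh t + sinh t * cos θ) :=
  (continuous_const.add (continuous_const.mul continuous_cos)).log
    fun θ ↦ (cosh_add_sinh_mul_cos_pos t θ).ne'

lemma continuous_exp_mul_log_cosh_add_sinh_mul_cos (w : ℂ) (t : ℝ) :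
    Continuous fun θ ↦ Complex.exp (w * (log (cosh t + sinh t * cos θ) : ℂ)) :=
  Complex.continuous_exp.comp <| continuous_const.mul <|
    Complex.continuous_ofReal.comp (continuous_log_cosh_add_sinh_mul_cos t)

lemma hasDerivAt_log_cosh_add_sinh_mul_cos (t θ : ℝ) :
    HasDerivAt (fun θ ↦ log (cosh t + sinh t * cos θ))
      (-(sinh t * sin θ) / (cosh t + sinh t * cos θ)) θ := by
  have h := (((hasDerivAt_cos θ).const_mul (sinh t)).const_add (cosh t)).log
    (cosh_add_sinh_mul_cos_pos t θ).ne'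
  rwa [mul_neg] at h

lemma cosh_sub_cosh_log_cosh_add_sinh_mul_cos (t θ : ℝ) :
    cosh t - cosh (log (cosh t + sinh t * cos θ))
      = (sinh t * sin θ) ^ 2 / (2 * (cosh t + sinh t * cos θ)) := by
  have hpos := cosh_add_sinh_mul_cos_pos t θ
  rw [cosh_log hpos]
  field_simp
  linear_combination (cosh_sq t) - sinh t ^ 2 * sin_sq_add_cos_sq θ

lemma div_mul_sq_div_two_mul_rpow_neg_half {a b : ℝ} (ha : 0 < a) (hb : 0 < b) :
    b / a * (b ^ 2 / (2 * a)) ^ (-(1 / 2) : ℝ) = √2 * a ^ (-(1 / 2) : ℝ) := by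
  rw [rpow_neg (by positivity), rpow_neg ha.le, ← sqrt_eq_rpow, ← sqrt_eq_rpow,
    sqrt_div (sq_nonneg b), sqrt_sq hb.le, sqrt_mul zero_le_two]
  have hsqrt_pos := sqrt_pos.mpr ha
  have hsqrt_sq := mul_self_sqrt ha.le
  field_simp
  linear_combination hsqrt_sq

lemma integral_Ioo_zero_two_pi_exp_mul_log_cosh_add_sinh_mul_cos (w : ℂ) (t : ℝ) :
    ∫ θ in Ioo 0 (2 * π), Complex.exp (w * (log (cosh t + sinh t * cos θ) : ℂ))
      = 2 * ∫ θ in Ioo 0 π, Complex.exp (w * (log (cosh t + sinh t * cos θ) : ℂ)) := by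
  rw [setIntegral_Ioo_eq_intervalIntegral (by positivity),
    setIntegral_Ioo_eq_intervalIntegral pi_pos.le,
    intervalIntegral.integral_zero_two_mul_eq_two_smul_of_reflect
      ((continuous_exp_mul_log_cosh_add_sinh_mul_cos w t).intervalIntegrable _ _)
      fun θ ↦ by rw [cos_two_pi_sub], Complex.real_smul, Complex.ofReal_ofNat]

noncomputable def mehlerKernel (lam t s : ℝ) : ℂ :=
  Complex.exp (Complex.I * lam * s) * ((cosh t - cosh s) ^ (-(1 / 2) : ℝ) : ℝ)

lemma mehlerKernel_add_mehlerKernel_neg (lam t s : ℝ) :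
    mehlerKernel lam t s + mehlerKernel lam t (-s)
      = ((2 * cos (lam * s) * (cosh t - cosh s) ^ (-(1 / 2) : ℝ) : ℝ) : ℂ) := by
  simp only [mehlerKernel, cosh_neg]
  push_cast
  rw [Complex.two_cos]
  ring_nf

section

variable {t : ℝ}

lemma strictAntiOn_log_cosh_add_sinh_mul_cos (ht : 0 < t) :
    StrictAntiOn (fun θ ↦ log (cosh t + sinh t * cos θ)) (Icc 0 π) := fun x hx y hy hxy ↦ by
  have hcos := strictAntiOn_cos hx hy hxy
  have hsinh := sinh_pos_iff.mpr ht
  exact log_lt_log (cosh_add_sinh_mul_cos_pos t y) (by gcongr)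

lemma image_log_cosh_add_sinh_mul_cos (ht : 0 < t) :
    (fun θ ↦ log (cosh t + sinh t * cos θ)) '' Ioo 0 π = Ioo (-t) t := by
  rw [(continuous_log_cosh_add_sinh_mul_cos t).continuousOn.image_Ioo_of_strictAntiOn pi_pos.le
    (strictAntiOn_log_cosh_add_sinh_mul_cos ht)]
  simp [← sub_eq_add_neg, cosh_sub_sinh, cosh_add_sinh]

lemma integral_Ioo_neg_eq_integral_log_cosh_add_sinh_mul_cos (ht : 0 < t) (g : ℝ → E) :
    ∫ s in Ioo (-t) t, g s = ∫ θ in Ioo 0 π,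
      |-(sinh t * sin θ) / (cosh t + sinh t * cos θ)| • g (log (cosh t + sinh t * cos θ)) := by
  rw [← image_log_cosh_add_sinh_mul_cos ht]
  exact integral_image_eq_integral_abs_deriv_smul measurableSet_Ioo
    (fun θ _ ↦ (hasDerivAt_log_cosh_add_sinh_mul_cos t θ).hasDerivWithinAt)
    ((strictAntiOn_log_cosh_add_sinh_mul_cos ht).injOn.mono Ioo_subset_Icc_self) g

lemma integrableOn_Ioo_neg_iff_log_cosh_add_sinh_mul_cos (ht : 0 < t) (g : ℝ → E) :
    IntegrableOn g (Ioo (-t) t) ↔ IntegrableOn (fun θ ↦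
      |-(sinh t * sin θ) / (cosh t + sinh t * cos θ)| • g (log (cosh t + sinh t * cos θ)))
      (Ioo 0 π) := by
  rw [← image_log_cosh_add_sinh_mul_cos ht]
  exact integrableOn_image_iff_integrableOn_abs_deriv_smul measurableSet_Ioo
    (fun θ _ ↦ (hasDerivAt_log_cosh_add_sinh_mul_cos t θ).hasDerivWithinAt)
    ((strictAntiOn_log_cosh_add_sinh_mul_cos ht).injOn.mono Ioo_subset_Icc_self) g

lemma abs_deriv_smul_mehlerKernel_log (lam : ℝ) (ht : 0 < t) {θ : ℝ} (hθ : θ ∈ Ioo 0 π) :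
    |-(sinh t * sin θ) / (cosh t + sinh t * cos θ)| •
        mehlerKernel lam t (log (cosh t + sinh t * cos θ))
      = √2 * Complex.exp
          ((Complex.I * lam - 1 / 2) * (log (cosh t + sinh t * cos θ) : ℂ)) := by
  have ha := cosh_add_sinh_mul_cos_pos t θ
  have hb : 0 < sinh t * sin θ :=
    mul_pos (sinh_pos_iff.mpr ht) (sin_pos_of_pos_of_lt_pi hθ.1 hθ.2)
  rw [neg_div, abs_neg, abs_of_pos (div_pos hb ha), mehlerKernel,
    cosh_sub_cosh_log_cosh_add_sinh_mul_cos, Complex.real_smul, mul_left_comm,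
    ← Complex.ofReal_mul, div_mul_sq_div_two_mul_rpow_neg_half ha hb, rpow_def_of_pos ha]
  push_cast
  rw [mul_left_comm, ← Complex.exp_add]
  ring_nf

lemma integrableOn_mehlerKernel (lam : ℝ) (ht : 0 < t) :
    IntegrableOn (mehlerKernel lam t) (Ioo (-t) t) := by
  rw [integrableOn_Ioo_neg_iff_log_cosh_add_sinh_mul_cos ht]
  refine IntegrableOn.congr_fun ?_
    (fun θ hθ ↦ (abs_deriv_smul_mehlerKernel_log lam ht hθ).symm) measurableSet_Ioo
  exact (continuous_const.mul (continuous_exp_mul_log_cosh_add_sinh_mul_cos _ t)).integrableOn_Icc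
    |>.mono_set Ioo_subset_Icc_self

lemma integral_mehlerKernel (lam : ℝ) (ht : 0 < t) :
    ∫ s in Ioo (-t) t, mehlerKernel lam t s = √2 * ∫ θ in Ioo 0 π,
      Complex.exp ((Complex.I * lam - 1 / 2) * (log (cosh t + sinh t * cos θ) : ℂ)) := by
  rw [integral_Ioo_neg_eq_integral_log_cosh_add_sinh_mul_cos ht,
    setIntegral_congr_fun measurableSet_Ioo fun θ hθ ↦
      abs_deriv_smul_mehlerKernel_log lam ht hθ,
    integral_const_mul]

lemma integral_mehlerKernel_eq_two_mul_integral_cos (lam : ℝ) (ht : 0 < t) :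
    ∫ s in Ioo (-t) t, mehlerKernel lam t s =
      ((2 * ∫ s in Ioo 0 t,
        cos (lam * s) * (cosh t - cosh s) ^ (-(1 / 2) : ℝ) : ℝ) : ℂ) := by
  rw [setIntegral_Ioo_eq_intervalIntegral (by linarith),
    intervalIntegral.integral_neg_eq_integral_add_comp_neg
      ((intervalIntegrable_iff_integrableOn_Ioo_of_le (by linarith)).mpr
        (integrableOn_mehlerKernel lam ht)),
    setIntegral_Ioo_eq_intervalIntegral ht.le]
  simp_rw [mehlerKernel_add_mehlerKernel_neg, intervalIntegral.integral_ofReal, mul_assoc,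
    intervalIntegral.integral_const_mul]

end

/-- Mehler–Dirichlet identity:
`(1/2π) ∫₀^{2π} (cosh t + sinh t cos θ)^{iλ−1/2} dθ
  = (√2/π) ∫₀ᵗ cos(λs) (cosh t − cosh s)^{−1/2} ds`,
where for `x > 0` and `w ∈ ℂ` the complex power `x^w` is `exp(w log x)`. -/
theorem mehler_dirichlet (lam t : ℝ) (ht : 0 < t) :
    ((1 / (2 * Real.pi) : ℝ) : ℂ) *
        ∫ θ in Set.Ioo (0 : ℝ) (2 * Real.pi),
          Complex.exp ((Complex.I * (lam : ℂ) - 1 / 2) *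
            ((Real.log (Real.cosh t + Real.sinh t * Real.cos θ) : ℝ) : ℂ))
      = (((Real.sqrt 2 / Real.pi) *
          ∫ s in Set.Ioo (0 : ℝ) t,
            Real.cos (lam * s) * (Real.cosh t - Real.cosh s) ^ (-(1 / 2) : ℝ) : ℝ) : ℂ) := by
  rw [integral_Ioo_zero_two_pi_exp_mul_log_cosh_add_sinh_mul_cos]
  set X := ∫ θ in Ioo 0 π,
    Complex.exp ((Complex.I * lam - 1 / 2) * (log (cosh t + sinh t * cos θ) : ℂ))
  have hX : √2 * X = _ := (integral_mehlerKernel lam ht).symm.trans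
    (integral_mehlerKernel_eq_two_mul_integral_cos lam ht)
  have hsqrt : (√2 : ℂ) ^ 2 = 2 := by norm_cast; exact sq_sqrt zero_le_two
  push_cast at hX ⊢
  linear_combination (√2 : ℂ) / (2 * π) * hX - X / (2 * π) * hsqrt
end
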